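/- Let p be a prime dividing n+1 and let 0 ≤ i, j ≤ v_p(n+1) and a, b ≥ 0 be integers. Then p^a·L(p^i) and p^b·L(p^j) are isomorphic as ℤG-lattices if and only if i = j. -/

import Mathlib

open Pointwise

/-- The matrix by which the adjacent transposition `(k k+1)` acts:
`E^{k,k-1} + 2 E^{k,k} + E^{k,k+1} - I_n` (indices `1,…,n` in the paper,
here shifted to `0,…,n-1`; out-of-range `E^{i,j}` are `0`). -/
def craigA (n : ℕ) (k : Fin n) : Matrix (Fin n) (Fin n) ℚ :=
  Matrix.of fun i j =>
    (if (i : ℕ) = (k : ℕ) ∧ (j : ℕ) + 1 = (k : ℕ) then 1 else 0)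
    + (if (i : ℕ) = (k : ℕ) ∧ (j : ℕ) = (k : ℕ) then 2 else 0)
    + (if (i : ℕ) = (k : ℕ) ∧ (j : ℕ) = (k : ℕ) + 1 then 1 else 0)
    - (if i = j then 1 else 0)

/-- `v = e_n + Σ_{i=1}^{n-1} (-1)^{n+1-i} i e_i` (with `e_i` the standard basis,
shifted to `0`-based indexing). -/
def craigV (n : ℕ) : Fin n → ℚ :=
  fun j => if (j : ℕ) = n - 1 then 1 else (-1 : ℚ) ^ (n - (j : ℕ)) * ((j : ℕ) + 1)

/-- `L(d) = (⊕_{i=1}^{n-1} ℤ·d·e_i) ⊕ ℤ·v` as a `ℤ`-submodule of `ℚ^n`. -/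
def craigL (n : ℕ) (d : ℕ) : Submodule ℤ (Fin n → ℚ) :=
  Submodule.span ℤ
    (insert (craigV n) {x | ∃ j : Fin n, (j : ℕ) < n - 1 ∧ x = (d : ℚ) • (Pi.single j 1 : Fin n → ℚ)})

/-- A `ℤ`-submodule is invariant under the action `ρ` of `𝔖_{n+1}`. -/
def Invar {n : ℕ} (ρ : Equiv.Perm (Fin (n + 1)) →* Matrix (Fin n) (Fin n) ℚ)
    (N : Submodule ℤ (Fin n → ℚ)) : Prop :=
  ∀ g : Equiv.Perm (Fin (n + 1)), ∀ x ∈ N, (ρ g).mulVec x ∈ N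

/-- `N` is a `ℤG`-sublattice of `M`. -/
def IsSubl {n : ℕ} (ρ : Equiv.Perm (Fin (n + 1)) →* Matrix (Fin n) (Fin n) ℚ)
    (M N : Submodule ℤ (Fin n → ℚ)) : Prop :=
  N ≤ M ∧ Invar ρ N

/-- The index `|M : N|` of `N` in `M` as additive subgroups (`0` if infinite). -/
noncomputable def subIndex {n : ℕ} (N M : Submodule ℤ (Fin n → ℚ)) : ℕ :=
  AddSubgroup.relIndex N.toAddSubgroup M.toAddSubgroup

/-- Isomorphism of `ℤG`-lattices: a `ℤ`-linear isomorphism commuting with the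
action of every `ρ g`. -/
def IsZGIso {n : ℕ} (ρ : Equiv.Perm (Fin (n + 1)) →* Matrix (Fin n) (Fin n) ℚ)
    (N N' : Submodule ℤ (Fin n → ℚ)) : Prop :=
  ∃ e : N ≃ₗ[ℤ] N',
    ∀ (g : Equiv.Perm (Fin (n + 1))) (x : N)
      (hx : (ρ g).mulVec (x : Fin n → ℚ) ∈ N),
      ((e ⟨(ρ g).mulVec (x : Fin n → ℚ), hx⟩ : N') : Fin n → ℚ)
        = (ρ g).mulVec ((e x : N') : Fin n → ℚ)

/-- `N` is a `p`-maximal sublattice of `M`: a maximal element of the set of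
proper `ℤG`-sublattices of `M` containing `p·M`. -/
def IsPMaximal {n : ℕ} (ρ : Equiv.Perm (Fin (n + 1)) →* Matrix (Fin n) (Fin n) ℚ)
    (p : ℕ) (M N : Submodule ℤ (Fin n → ℚ)) : Prop :=
  (IsSubl ρ M N ∧ N ≠ M ∧ (p : ℚ) • M ≤ N) ∧
    ∀ N' : Submodule ℤ (Fin n → ℚ),
      IsSubl ρ M N' → N' ≠ M → (p : ℚ) • M ≤ N' → N ≤ N' → N' = N

/-- `rad_p(M)`: the intersection of all `p`-maximal sublattices of `M`. -/
def radP {n : ℕ} (ρ : Equiv.Perm (Fin (n + 1)) →* Matrix (Fin n) (Fin n) ℚ)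
    (p : ℕ) (M : Submodule ℤ (Fin n → ℚ)) : Submodule ℤ (Fin n → ℚ) :=
  sInf {N | IsPMaximal ρ p M N}

/-- `Φ_p(M)`: the `ℤG`-sublattices `L` of `M` with `rad_p(M) ⊆ L ⊆ M`. -/
def PhiP {n : ℕ} (ρ : Equiv.Perm (Fin (n + 1)) →* Matrix (Fin n) (Fin n) ℚ)
    (p : ℕ) (M : Submodule ℤ (Fin n → ℚ)) : Set (Submodule ℤ (Fin n → ℚ)) :=
  {L | IsSubl ρ M L ∧ radP ρ p M ≤ L}

/-- `μ_p(M, L) = Σ_J (-1)^{|J|}` over subsets `J` of `max_p(M)` with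
`∩_{N ∈ J} N = L` (the empty intersection being `M`). -/
noncomputable def muP {n : ℕ}
    (ρ : Equiv.Perm (Fin (n + 1)) →* Matrix (Fin n) (Fin n) ℚ)
    (p : ℕ) (M L : Submodule ℤ (Fin n → ℚ)) : ℤ :=
  ∑ᶠ J ∈ {J : Finset (Submodule ℤ (Fin n → ℚ)) |
      (∀ N ∈ J, IsPMaximal ρ p M N) ∧ M ⊓ J.inf id = L},
    (-1 : ℤ) ^ J.card

/-!
An isomorphism `e` of `ℤG`-lattices extends `ℚ`-linearly to `ℚ^n` and then commutes with every
`ρ g`. Each `ρ(k k+1) + 1` is the rank-one matrix `e_k b_kᵀ` with `b_k = e_{k-1} + 2 e_k + e_{k+1}`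
(`craigRow`), and only scalars commute with all of them, so `e` is multiplication by some `c`.
Hence `c • L(p^i) = L(p^j)` for a rational `c`. Since `v` has last coordinate `1` and the last
coordinates of `L(d)` are integers, `1/c` is an integer; the first coordinate of `c p^i e_1`
lies in `p^j ℤ`, so `p^j ∣ p^i`, and symmetrically `p^i ∣ p^j`. Conversely, rescaling by
`p^b / p^a` is an isomorphism.
-/

open Matrix

theorem Submodule.exists_rat_linearMap_extend {V W : Type*} [AddCommGroup V] [Module ℚ V]
    [AddCommGroup W] [Module ℚ W] (N : Submodule ℤ V) (hN : Submodule.span ℚ (N : Set V) = ⊤)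
    (f : N →ₗ[ℤ] W) : ∃ F : V →ₗ[ℚ] W, ∀ x : N, F x = f x := by
  let S := nonZeroDivisors ℤ
  have := isLocalizedModule_id S V ℚ
  have := isLocalizedModule_id S W ℚ
  let incl := N.toLocalized' ℚ S LinearMap.id
  have hunits := IsLocalizedModule.map_units (S := S) (LinearMap.id : W →ₗ[ℤ] W)
  have htop : N.localized' ℚ S LinearMap.id = ⊤ := by
    rw [Submodule.localized'_eq_span]; simpa using hN
  let G : V →ₗ[ℤ] W := (IsLocalizedModule.lift S incl f hunits).comp
    ((LinearEquiv.ofTop _ htop).symm.restrictScalars ℤ).toLinearMap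
  refine ⟨G.extendScalarsOfIsLocalization S ℚ, fun x => ?_⟩
  rw [← LinearMap.congr_fun (IsLocalizedModule.lift_comp S incl f hunits) x]
  rfl

theorem Matrix.apply_eq_zero_of_commute_vecMulVec_single {ι R : Type*} [Fintype ι]
    [DecidableEq ι] [CommRing R] [NoZeroDivisors R] {M : Matrix ι ι R} {k : ι} {b : ι → R}
    (hM : Commute M (vecMulVec (Pi.single k 1) b)) (hb : b k ≠ 0) {i : ι} (hi : i ≠ k) :
    M i k = 0 := by
  have := congr_fun₂ hM i k
  simp only [mul_vecMulVec, vecMulVec_mul, vecMulVec_apply, mulVec_single_one, col_apply,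
    Pi.single_eq_of_ne hi, zero_mul] at this
  exact (mul_eq_zero.1 this).resolve_right hb

theorem Matrix.IsDiag.apply_eq_of_commute_vecMulVec_single {ι R : Type*} [Fintype ι]
    [DecidableEq ι] [CommRing R] [NoZeroDivisors R] {M : Matrix ι ι R} (hd : M.IsDiag)
    {k j : ι} {b : ι → R} (hM : Commute M (vecMulVec (Pi.single k 1) b)) (hb : b j ≠ 0) :
    M k k = M j j := by
  have := congr_fun₂ hM k j
  rw [← hd.diagonal_diag] at this
  simp only [mul_vecMulVec, vecMulVec_mul, vecMulVec_apply, mulVec_single_one, col_apply,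
    vecMul_diagonal, Pi.single_eq_same, one_mul, diagonal_apply_eq, diag_apply] at this
  exact mul_right_cancel₀ hb (this.trans (mul_comm _ _))

section

variable {n : ℕ} {ρ : Equiv.Perm (Fin (n + 1)) →* Matrix (Fin n) (Fin n) ℚ}

theorem invar_of_forall_swap {N : Submodule ℤ (Fin n → ℚ)}
    (h : ∀ k : Fin n, ∀ x ∈ N, ρ (Equiv.swap k.castSucc k.succ) *ᵥ x ∈ N) : Invar ρ N := by
  intro g
  induction (Equiv.Perm.mclosure_swap_castSucc_succ n).ge (Set.mem_univ g)
    using Submonoid.closure_induction with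
  | mem _ hg => obtain ⟨k, rfl⟩ := hg; exact h k
  | one => simp
  | mul g g' _ _ hg hg' => intro x hx; simpa [Matrix.mulVec_mulVec] using hg _ (hg' x hx)

theorem Invar.smul {N : Submodule ℤ (Fin n → ℚ)} (hN : Invar ρ N) (c : ℚ) : Invar ρ (c • N) := by
  rintro g _ ⟨x, hx, rfl⟩
  exact ⟨_, hN g x hx, (Matrix.mulVec_smul _ c x).symm⟩

theorem isZGIso_smul (N : Submodule ℤ (Fin n → ℚ)) {c : ℚ} (hc : c ≠ 0) : IsZGIso ρ N (c • N) :=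
  ⟨((LinearEquiv.smulOfNeZero ℚ _ c hc).restrictScalars ℤ).submoduleMap N,
    fun g x _ => (Matrix.mulVec_smul (ρ g) c (x : Fin n → ℚ)).symm⟩

theorem IsZGIso.exists_smul_eq {N N' : Submodule ℤ (Fin n → ℚ)}
    (hscalar : ∀ M : Matrix (Fin n) (Fin n) ℚ, (∀ g, Commute M (ρ g)) → ∃ c : ℚ, M = c • 1)
    (hN : Invar ρ N) (hspan : Submodule.span ℚ (N : Set (Fin n → ℚ)) = ⊤)
    (h : IsZGIso ρ N N') : ∃ c : ℚ, c • N = N' := by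
  obtain ⟨e, he⟩ := h
  obtain ⟨F, hF⟩ := N.exists_rat_linearMap_extend hspan (N'.subtype ∘ₗ e.toLinearMap)
  have hcomm : ∀ g, Commute (LinearMap.toMatrix' F) (ρ g) := fun g => by
    have : F ∘ₗ toLin' (ρ g) = toLin' (ρ g) ∘ₗ F := LinearMap.ext_on hspan fun x hx => by
      simpa [hF ⟨x, hx⟩, hF ⟨_, hN g x hx⟩] using he g ⟨x, hx⟩ (hN g x hx)
    simpa [Commute, SemiconjBy, LinearMap.toMatrix'_comp] using congrArg LinearMap.toMatrix' this
  obtain ⟨c, hc⟩ := hscalar _ hcomm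
  have hFc (x : Fin n → ℚ) : F x = c • x := by
    rw [← Matrix.toLin'_toMatrix' F, hc]; simp
  refine ⟨c, le_antisymm ?_ fun y hy => ?_⟩
  · rintro _ ⟨x, hx, rfl⟩
    have hex : c • x = e ⟨x, hx⟩ := by simpa [hFc] using hF ⟨x, hx⟩
    exact (hex ▸ (e ⟨x, hx⟩).2 : c • x ∈ N')
  · refine (Submodule.mem_smul_pointwise_iff_exists _ _ _).2 ⟨_, (e.symm ⟨y, hy⟩).2, ?_⟩
    simpa [hFc] using hF (e.symm ⟨y, hy⟩)

end

def craigRow (n : ℕ) (k : Fin n) : Fin n → ℤ := fun j =>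
  (if (j : ℕ) + 1 = (k : ℕ) then 1 else 0) + (if (j : ℕ) = (k : ℕ) then 2 else 0)
    + (if (j : ℕ) = (k : ℕ) + 1 then 1 else 0)

theorem craigA_eq_vecMulVec_sub_one (n : ℕ) (k : Fin n) :
    craigA n k = vecMulVec (Pi.single k 1) ((↑) ∘ craigRow n k) - 1 := by
  ext i j
  by_cases hi : i = k
  · subst hi; simp [craigA, craigRow, vecMulVec_apply, one_apply]
  · simp [craigA, craigRow, vecMulVec_apply, one_apply, hi, Fin.val_ne_of_ne hi]

theorem craigA_mulVec (n : ℕ) (k : Fin n) (x : Fin n → ℚ) :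
    craigA n k *ᵥ x = (((↑) ∘ craigRow n k) ⬝ᵥ x) • Pi.single k 1 - x := by
  simp [craigA_eq_vecMulVec_sub_one, sub_mulVec, vecMulVec_mulVec]

theorem eq_smul_one_of_forall_commute_craigA {n : ℕ} {M : Matrix (Fin n) (Fin n) ℚ}
    (h : ∀ k, Commute M (craigA n k)) : ∃ c : ℚ, M = c • 1 := by
  have hR (k : Fin n) : Commute M (vecMulVec (Pi.single k 1) ((↑) ∘ craigRow n k)) := by
    simpa [craigA_eq_vecMulVec_sub_one] using (h k).add_right (Commute.one_right M)
  have hdiag : M.IsDiag := fun i k hik =>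
    apply_eq_zero_of_commute_vecMulVec_single (hR k) (by simp [craigRow]) hik
  cases n with
  | zero => exact ⟨0, Subsingleton.elim _ _⟩
  | succ m =>
    have hconst (i : Fin (m + 1)) : M i i = M 0 0 := by
      induction i using Fin.induction with
      | zero => rfl
      | succ k ih =>
        have hb : ((craigRow (m + 1) k.castSucc k.succ : ℤ) : ℚ) ≠ 0 := by
          have : (k : ℕ) + 1 + 1 ≠ k := by omega
          simp [craigRow, this]
        rw [← ih]
        exact (hdiag.apply_eq_of_commute_vecMulVec_single (hR k.castSucc) hb).symm
    refine ⟨M 0 0, ext fun i j => ?_⟩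
    by_cases hij : i = j
    · subst hij; simp [hconst]
    · simp [hdiag hij, one_apply_ne hij]

theorem craigRow_dotProduct_craigV {n : ℕ} (hn : 2 ≤ n) (k : Fin n) :
    ((↑) ∘ craigRow n k) ⬝ᵥ craigV n = if n - 2 ≤ (k : ℕ) then (n : ℚ) + 1 else 0 := by
  obtain ⟨K, hK⟩ := k
  simp only [dotProduct, Function.comp_apply, craigRow, craigV, Int.cast_add, Int.cast_ite,
    Int.cast_one, Int.cast_zero, Int.cast_ofNat, Fin.sum_univ_eq_sum_range (fun m =>
    ((if m + 1 = K then 1 else 0) + (if m = K then 2 else 0) + (if m = K + 1 then 1 else 0)) *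
      (if m = n - 1 then 1 else (-1 : ℚ) ^ (n - m) * (m + 1))) n]
  simp only [add_mul, ite_mul, one_mul, zero_mul, Finset.sum_add_distrib, Finset.sum_ite_eq',
    Finset.mem_range]
  obtain ⟨r, rfl⟩ : ∃ r, n = K + (r + 1) := ⟨n - K - 1, by omega⟩
  rcases K with _ | K <;> rcases r with _ | _ | r <;> try omega
  all_goals
    simp (disch := omega) only [if_pos, if_neg, Finset.sum_ite_eq', Finset.mem_range,
      Finset.sum_const_zero, add_left_inj, Nat.add_assoc, Nat.add_sub_cancel,
      Nat.add_sub_cancel_left, Nat.add_sub_add_left]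
    push_cast [pow_succ]
    ring

theorem craigV_mem_craigL (n d : ℕ) : craigV n ∈ craigL n d :=
  Submodule.subset_span (Set.mem_insert _ _)

theorem craigV_last {n : ℕ} (t : Fin n) (ht : (t : ℕ) = n - 1) : craigV n t = 1 := by
  simp [craigV, ht]

theorem smul_single_mem_craigL (n d : ℕ) (t : Fin n) :
    (d : ℚ) • Pi.single t 1 ∈ craigL n d := by
  by_cases ht : (t : ℕ) < n - 1
  · exact Submodule.subset_span (Or.inr ⟨t, ht, rfl⟩)
  have hlast : (t : ℕ) = n - 1 := by omega
  have hcoord (s : Fin n) (hs : s ≠ t) : (d : ℚ) • Pi.single s (craigV n s)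
      = ((-1) ^ (n - s) * (s + 1) : ℤ) • ((d : ℚ) • Pi.single s 1) := by
    have : (s : ℕ) ≠ n - 1 := fun h => hs (Fin.ext (h.trans hlast.symm))
    ext j
    by_cases hj : j = s
    · subst hj; simp [craigV, this, mul_comm]
    · simp [hj]
  have hdecomp : (d : ℚ) • Pi.single t 1 = (d : ℤ) • craigV n
      - ∑ s ∈ Finset.univ.erase t, ((-1) ^ (n - s) * (s + 1) : ℤ) • ((d : ℚ) • Pi.single s 1) := by
    rw [eq_sub_iff_add_eq, ← Finset.sum_congr rfl fun s hs => hcoord s (Finset.ne_of_mem_erase hs),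
      ← Finset.smul_sum, ← smul_add, ← craigV_last t hlast,
      Finset.add_sum_erase _ (fun s => Pi.single s (craigV n s)) (Finset.mem_univ t),
      Finset.univ_sum_single, natCast_zsmul, Nat.cast_smul_eq_nsmul]
  rw [hdecomp]
  refine sub_mem (zsmul_mem (craigV_mem_craigL n d) _) (sum_mem fun s hs => zsmul_mem ?_ _)
  exact Submodule.subset_span (Or.inr ⟨s, by have := Finset.ne_of_mem_erase hs; omega, rfl⟩)

theorem craigA_mulVec_mem_craigL {n d : ℕ} (hn : 2 ≤ n) (hd : d ∣ n + 1) (k : Fin n)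
    {x : Fin n → ℚ} (hx : x ∈ craigL n d) : craigA n k *ᵥ x ∈ craigL n d := by
  suffices craigL n d ≤ (craigL n d).comap ((Matrix.toLin' (craigA n k)).restrictScalars ℤ) from
    this hx
  refine Submodule.span_le.2 (Set.insert_subset_iff.2 ⟨?_, ?_⟩)
  · change craigA n k *ᵥ craigV n ∈ craigL n d
    obtain ⟨c, hc⟩ := hd
    have hv : craigA n k *ᵥ craigV n = (if n - 2 ≤ (k : ℕ) then c else 0 : ℤ) •
        ((d : ℚ) • Pi.single k 1) - craigV n := by
      rw [craigA_mulVec, craigRow_dotProduct_craigV hn, ← Int.cast_smul_eq_zsmul ℚ, smul_smul]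
      split_ifs
      · congr 2; exact_mod_cast hc.trans (mul_comm _ _)
      · simp
    rw [hv]
    exact sub_mem (zsmul_mem (smul_single_mem_craigL n d k) _) (craigV_mem_craigL n d)
  · rintro _ ⟨t, -, rfl⟩
    change craigA n k *ᵥ ((d : ℚ) • Pi.single t 1) ∈ craigL n d
    have hcol : craigA n k *ᵥ ((d : ℚ) • Pi.single t 1)
        = craigRow n k t • ((d : ℚ) • Pi.single k 1) - (d : ℚ) • Pi.single t 1 := by
      rw [craigA_mulVec, dotProduct_smul, dotProduct_single, mul_one, smul_eq_mul, mul_comm,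
        mul_smul, Function.comp_apply, Int.cast_smul_eq_zsmul]
    rw [hcol]
    exact sub_mem (zsmul_mem (smul_single_mem_craigL n d k) _)
      (smul_single_mem_craigL n d t)

theorem invar_craigL {n d : ℕ} (hn : 2 ≤ n)
    {ρ : Equiv.Perm (Fin (n + 1)) →* Matrix (Fin n) (Fin n) ℚ}
    (hρ : ∀ k : Fin n, ρ (Equiv.swap k.castSucc k.succ) = craigA n k) (hd : d ∣ n + 1) :
    Invar ρ (craigL n d) :=
  invar_of_forall_swap fun k _ hx => hρ k ▸ craigA_mulVec_mem_craigL hn hd k hx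

theorem span_craigL {n d : ℕ} (hd : d ≠ 0) :
    Submodule.span ℚ (craigL n d : Set (Fin n → ℚ)) = ⊤ := by
  rw [eq_top_iff, ← (Pi.basisFun ℚ (Fin n)).span_eq, Submodule.span_le]
  rintro _ ⟨t, rfl⟩
  have := Submodule.smul_mem _ (d : ℚ)⁻¹ (Submodule.subset_span (smul_single_mem_craigL n d t))
  rwa [inv_smul_smul₀ (Nat.cast_ne_zero.2 hd), ← Pi.basisFun_apply] at this

theorem exists_intCast_eq_of_mem_craigL {n d : ℕ} {x : Fin n → ℚ} (hx : x ∈ craigL n d)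
    (i : Fin n) (hi : (i : ℕ) = n - 1) : ∃ m : ℤ, x i = m := by
  suffices craigL n d ≤ (LinearMap.range (Algebra.linearMap ℤ ℚ)).comap (LinearMap.proj i) by
    obtain ⟨m, hm⟩ := this hx
    exact ⟨m, hm.symm⟩
  refine Submodule.span_le.2 (Set.insert_subset_iff.2 ⟨⟨1, by simp [craigV_last i hi]⟩, ?_⟩)
  rintro _ ⟨t, ht, rfl⟩
  exact ⟨0, by simp [Fin.ext_iff, hi, ht.ne']⟩

theorem exists_sub_mul_craigV_eq_of_mem_craigL {n d : ℕ} {x : Fin n → ℚ} (hx : x ∈ craigL n d)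
    (i j : Fin n) (hj : (j : ℕ) = n - 1) :
    ∃ c : ℤ, x i - x j * craigV n i = d * c := by
  suffices craigL n d ≤ (Submodule.span ℤ {(d : ℚ)}).comap
      (LinearMap.proj i - craigV n i • LinearMap.proj j) by
    obtain ⟨c, hc⟩ := Submodule.mem_span_singleton.1 (this hx)
    exact ⟨c, by simpa [mul_comm] using hc.symm⟩
  refine Submodule.span_le.2 (Set.insert_subset_iff.2 ⟨by simp [craigV_last j hj], ?_⟩)
  rintro _ ⟨t, ht, rfl⟩
  have htj : t ≠ j := fun h => by omega
  by_cases hit : i = t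
  · simp [hit, htj.symm, Submodule.mem_span_singleton_self]
  · simp [Ne.symm hit, htj.symm]

theorem dvd_of_smul_craigL_eq {n d d' : ℕ} (hn : 2 ≤ n) {r : ℚ}
    (h : r • craigL n d = craigL n d') : d' ∣ d := by
  let first : Fin n := ⟨0, by omega⟩
  let last : Fin n := ⟨n - 1, by omega⟩
  obtain ⟨y, hy, hyv⟩ := (Submodule.mem_smul_pointwise_iff_exists _ _ _).1
    (h ▸ craigV_mem_craigL n d')
  obtain ⟨m, hm⟩ := exists_intCast_eq_of_mem_craigL hy last rfl
  have hrm : r * m = 1 := by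
    simpa [hm, craigV_last last rfl] using congr_fun hyv last
  obtain ⟨c, hc⟩ := exists_sub_mul_craigV_eq_of_mem_craigL
    (h ▸ Submodule.smul_mem_pointwise_smul _ r _ (smul_single_mem_craigL n d first))
    first last rfl
  have hlf : last ≠ first := by simp [last, first, Fin.ext_iff]; omega
  replace hc : r * d = d' * c := by simpa [hlf] using hc
  refine Int.natCast_dvd_natCast.1 ⟨m * c, ?_⟩
  have : (d : ℚ) = d' * (m * c) := by
    calc (d : ℚ) = r * m * d := by rw [hrm, one_mul]
      _ = m * (r * d) := by ring
      _ = d' * (m * c) := by rw [hc]; ring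
  exact_mod_cast this

theorem eq_of_smul_craigL_eq {n d d' : ℕ} (hn : 2 ≤ n) {r : ℚ}
    (h : r • craigL n d = craigL n d') : d = d' := by
  have hr : r ≠ 0 := by
    rintro rfl
    obtain ⟨y, -, hy⟩ := (Submodule.mem_smul_pointwise_iff_exists _ _ _).1
      (h ▸ craigV_mem_craigL n d')
    simpa [craigV_last (⟨n - 1, by omega⟩ : Fin n) rfl] using congr_fun hy ⟨n - 1, by omega⟩
  refine Nat.dvd_antisymm (dvd_of_smul_craigL_eq hn (r := r⁻¹) ?_) (dvd_of_smul_craigL_eq hn h)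
  rw [← h, inv_smul_smul₀ hr]

theorem scaled_L_iso_iff_general (n : ℕ) (hn : 2 ≤ n)
    (ρ : Equiv.Perm (Fin (n + 1)) →* Matrix (Fin n) (Fin n) ℚ)
    (hρ : ∀ k : Fin n, ρ (Equiv.swap k.castSucc k.succ) = craigA n k)
    (p : ℕ) (hp : p.Prime)
    (i j : ℕ) (hi : i ≤ padicValNat p (n + 1))
    (a b : ℕ) :
    IsZGIso ρ (((p : ℚ) ^ a) • craigL n (p ^ i))
        (((p : ℚ) ^ b) • craigL n (p ^ j)) ↔ i = j := by
  have hp0 : (p : ℚ) ≠ 0 := Nat.cast_ne_zero.2 hp.ne_zero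
  constructor
  · intro h
    have hscalar (M : Matrix (Fin n) (Fin n) ℚ) (hM : ∀ g, Commute M (ρ g)) :
        ∃ c : ℚ, M = c • 1 :=
      eq_smul_one_of_forall_commute_craigA fun k => hρ k ▸ hM _
    have hinv := (invar_craigL hn hρ ((pow_dvd_pow p hi).trans pow_padicValNat_dvd)).smul
      ((p : ℚ) ^ a)
    have hspan : Submodule.span ℚ
        ((((p : ℚ) ^ a) • craigL n (p ^ i) : Submodule ℤ _) : Set (Fin n → ℚ)) = ⊤ := by
      rw [Submodule.coe_pointwise_smul,
        Submodule.span_smul_eq_of_isUnit _ _ (pow_ne_zero a hp0).isUnit,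
        span_craigL (pow_ne_zero i hp.ne_zero)]
    obtain ⟨c, hc⟩ := h.exists_smul_eq hscalar hinv hspan
    have : ((((p : ℚ) ^ b)⁻¹ * c) * (p : ℚ) ^ a) • craigL n (p ^ i) = craigL n (p ^ j) := by
      rw [mul_smul, mul_smul, hc, inv_smul_smul₀ (pow_ne_zero b hp0)]
    exact Nat.pow_right_injective hp.two_le (eq_of_smul_craigL_eq hn this)
  · rintro rfl
    have := isZGIso_smul (ρ := ρ) ((p : ℚ) ^ a • craigL n (p ^ i))
      (div_ne_zero (pow_ne_zero b hp0) (pow_ne_zero a hp0))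
    rwa [smul_smul, div_mul_cancel₀ _ (pow_ne_zero a hp0)] at this

/-- `p^a·L(p^i)` and `p^b·L(p^j)` are isomorphic as
`ℤG`-lattices if and only if `i = j`. -/
theorem scaled_L_iso_iff (n : ℕ) (hn : 2 ≤ n)
    (ρ : Equiv.Perm (Fin (n + 1)) →* Matrix (Fin n) (Fin n) ℚ)
    (hρ : ∀ k : Fin n, ρ (Equiv.swap k.castSucc k.succ) = craigA n k)
    (p : ℕ) (hp : p.Prime) (hpd : p ∣ n + 1)
    (i j : ℕ) (hi : i ≤ padicValNat p (n + 1)) (hj : j ≤ padicValNat p (n + 1))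
    (a b : ℕ) :
    IsZGIso ρ (((p : ℚ) ^ a) • craigL n (p ^ i))
        (((p : ℚ) ^ b) • craigL n (p ^ j)) ↔ i = j :=
  scaled_L_iso_iff_general n hn ρ hρ p hp i j hi a b
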